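/- arXiv:2401.07924 — 2 statements merged into one kernel-verified Lean document; each statement's English description precedes it below -/
import Mathlib

section
/- For every n ≥ 3, the lower central series of the cactus group J_n does not stop: for every k ≥ 1, Γ_{k+1}(J_n) is a proper subgroup of Γ_k(J_n). -/
/-- Generators of the cactus group `J n`: pairs `(p, q)` with `1 ≤ p < q ≤ n`. -/
abbrev CactusGen (n : ℕ) := {pq : ℕ × ℕ // 1 ≤ pq.1 ∧ pq.1 < pq.2 ∧ pq.2 ≤ n}

/-- The defining relators of the standard presentation of the cactus group `J n`:
`σ_{p,q}² = 1`; `σ_{p,q}σ_{r,s} = σ_{r,s}σ_{p,q}` when `[p,q] ∩ [r,s] = ∅`;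
and `σ_{p,q}σ_{r,s} = σ_{p+q-s,p+q-r}σ_{p,q}` when `[r,s] ⊆ [p,q]`. -/
def cactusRels (n : ℕ) : Set (FreeGroup (CactusGen n)) :=
  { w | (∃ g : CactusGen n, w = FreeGroup.of g ^ 2) ∨
    (∃ g h : CactusGen n, (g.1.2 < h.1.1 ∨ h.1.2 < g.1.1) ∧
      w = FreeGroup.of g * FreeGroup.of h * (FreeGroup.of h * FreeGroup.of g)⁻¹) ∨
    (∃ g h k : CactusGen n, g.1.1 ≤ h.1.1 ∧ h.1.2 ≤ g.1.2 ∧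
      k.1.1 = g.1.1 + g.1.2 - h.1.2 ∧ k.1.2 = g.1.1 + g.1.2 - h.1.1 ∧
      w = FreeGroup.of g * FreeGroup.of h * (FreeGroup.of k * FreeGroup.of g)⁻¹) }

/-- The cactus group `J n`, as a presented group. -/
abbrev CactusGroup (n : ℕ) := PresentedGroup (cactusRels n)

/-- The generator `σ_{p,q}` of the cactus group `J n` (junk value `1` for invalid indices). -/
def cactusσ (n p q : ℕ) : CactusGroup n :=
  if h : 1 ≤ p ∧ p < q ∧ q ≤ n then PresentedGroup.of ⟨(p, q), h⟩ else 1

/-!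
Sending `σ_{p,q}` to the reflection `sr (p + q)` of the infinite dihedral group
`D∞ = DihedralGroup 0` when `q - p ≥ n - 2`, and to `1` otherwise, respects the cactus
relations: two such long intervals are never disjoint, and the reflection of a long interval
inside another one is long. For `n ≥ 3` the images of `σ_{1,n-1}` and `σ_{1,n}` are adjacent
reflections, which generate `D∞`, so `J_n` surjects onto `D∞`.
The lower central series of `D∞` does not stop: `Γ_{k+1}(D∞)` consists of rotations by
multiples of `2^k` and contains the rotation by `2^k`. A surjection maps each `Γ_k` onto `Γ_k`,
so the lower central series of `J_n` cannot stop either.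
-/

open scoped commutatorElement

theorem Subgroup.map_lowerCentralSeries_of_surjective {G H : Type*} [Group G] [Group H]
    {f : G →* H} (hf : Function.Surjective f) (k : ℕ) :
    ((⊤ : Subgroup G).lowerCentralSeries k).map f = (⊤ : Subgroup H).lowerCentralSeries k := by
  rw [map_lowerCentralSeries, map_top_of_surjective f hf]

theorem Subgroup.lowerCentralSeries_succ_lt_of_surjective {G H : Type*} [Group G] [Group H]
    {f : G →* H} (hf : Function.Surjective f) {k : ℕ}
    (hH : (⊤ : Subgroup H).lowerCentralSeries (k + 1) < (⊤ : Subgroup H).lowerCentralSeries k) :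
    (⊤ : Subgroup G).lowerCentralSeries (k + 1) < (⊤ : Subgroup G).lowerCentralSeries k :=
  lt_of_le_of_ne (lowerCentralSeries_antitone _ k.le_succ) fun h => hH.ne <| by
    rw [← map_lowerCentralSeries_of_surjective hf, h, map_lowerCentralSeries_of_surjective hf]

namespace DihedralGroup

theorem eq_top_of_sr_mem_of_sr_add_one_mem {n : ℕ} {H : Subgroup (DihedralGroup n)} {i : ZMod n}
    (hi : sr i ∈ H) (hi' : sr (i + 1) ∈ H) : H = ⊤ := by
  have hr : ∀ j : ZMod n, r j ∈ H := fun j => by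
    rw [← ZMod.intCast_zmod_cast j, ← r_one_zpow]
    refine H.zpow_mem ?_ _
    simpa [sr_mul_sr] using H.mul_mem hi hi'
  refine eq_top_iff.2 fun g _ => ?_
  rcases g with j | j
  · exact hr j
  · simpa [sr_mul_r] using H.mul_mem hi (hr (j - i))

/-- The rotations by multiples of `2 ^ j` for `j ≥ 1`, and all of `D∞` for `j = 0`. -/
def twoPowFiltration (j : ℕ) : Subgroup (DihedralGroup 0) where
  carrier := {g | match g with
    | r i => (2 ^ j : ZMod 0) ∣ i
    | sr _ => j = 0}
  one_mem' := dvd_zero _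
  mul_mem' := by
    rintro (a | a) (b | b) ha hb <;>
      simp only [Set.mem_ofPred_eq, r_mul_r, r_mul_sr, sr_mul_r, sr_mul_sr] at ha hb ⊢
    · exact dvd_add ha hb
    · exact hb
    · exact ha
    · simp [ha]
  inv_mem' := by
    rintro (a | a) ha <;> simp only [Set.mem_ofPred_eq, inv_r, inv_sr] at ha ⊢
    · exact dvd_neg.2 ha
    · exact ha

theorem r_mem_twoPowFiltration {j : ℕ} {i : ZMod 0} :
    r i ∈ twoPowFiltration j ↔ (2 ^ j : ZMod 0) ∣ i := Iff.rfl

theorem sr_mem_twoPowFiltration {j : ℕ} {i : ZMod 0} :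
    sr i ∈ twoPowFiltration j ↔ j = 0 := Iff.rfl

theorem twoPowFiltration_zero : twoPowFiltration 0 = ⊤ := by
  refine eq_top_iff.2 fun g _ => ?_
  rcases g with i | i
  · exact r_mem_twoPowFiltration.2 (by simp)
  · rfl

theorem commutator_mem_twoPowFiltration {j : ℕ} {g : DihedralGroup 0}
    (hg : g ∈ twoPowFiltration j) (h : DihedralGroup 0) :
    ⁅g, h⁆ ∈ twoPowFiltration (j + 1) := by
  rcases g with a | a <;> rcases h with b | b <;>
    simp only [commutatorElement_def, r_mul_r, r_mul_sr, sr_mul_r, sr_mul_sr, inv_r, inv_sr,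
      r_mem_twoPowFiltration, sr_mem_twoPowFiltration] at hg ⊢
  · exact ⟨0, by ring⟩
  · obtain ⟨c, rfl⟩ := hg
    exact ⟨c, by ring⟩
  · subst hg
    exact ⟨-b, by ring⟩
  · subst hg
    exact ⟨b - a, by ring⟩

theorem isDescendingCentralSeries_twoPowFiltration :
    Subgroup.IsDescendingCentralSeries twoPowFiltration :=
  ⟨twoPowFiltration_zero, fun _ _ hg h => commutator_mem_twoPowFiltration hg h⟩

theorem r_two_pow_mem_lowerCentralSeries (k : ℕ) :
    r (2 ^ k : ZMod 0) ∈ (⊤ : Subgroup (DihedralGroup 0)).lowerCentralSeries k := by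
  induction k with
  | zero => trivial
  | succ k ih =>
    have hcomm :
        ⁅(r (2 ^ k) : DihedralGroup 0), (sr 0 : DihedralGroup 0)⁆ = r (2 ^ (k + 1)) := by
      simp only [commutatorElement_def, r_mul_sr, sr_mul_r, sr_mul_sr, inv_r, inv_sr]
      congr 1; ring
    exact hcomm ▸ Subgroup.commutator_mem_commutator ih (Subgroup.mem_top _)

theorem lowerCentralSeries_succ_lt (k : ℕ) :
    (⊤ : Subgroup (DihedralGroup 0)).lowerCentralSeries (k + 1) <
      (⊤ : Subgroup (DihedralGroup 0)).lowerCentralSeries k := by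
  refine lt_of_le_of_ne (Subgroup.lowerCentralSeries_antitone _ k.le_succ) fun h => ?_
  -- `ZMod 0` is `ℤ` by definition.
  have hdvd : (2 : ℤ) ^ (k + 1) ∣ 2 ^ k := Subgroup.descending_central_series_ge_lower _
    isDescendingCentralSeries_twoPowFiltration (k + 1) (h ▸ r_two_pow_mem_lowerCentralSeries k)
  have := (pow_dvd_pow_iff two_ne_zero (by norm_num [Int.isUnit_iff])).1 hdvd
  omega

end DihedralGroup

namespace CactusGroup

open DihedralGroup

def genToDihedral (n : ℕ) (g : CactusGen n) : DihedralGroup 0 :=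
  if n ≤ g.1.2 - g.1.1 + 2 then sr (g.1.1 + g.1.2 : ℕ) else 1

theorem genToDihedral_mul_self (n : ℕ) (g : CactusGen n) :
    genToDihedral n g * genToDihedral n g = 1 := by
  unfold genToDihedral
  split_ifs
  · exact sr_mul_self _
  · exact mul_one 1

theorem lift_genToDihedral_eq_one (n : ℕ) :
    ∀ w ∈ cactusRels n, FreeGroup.lift (genToDihedral n) w = 1 := by
  rintro w (⟨g, rfl⟩ | ⟨g, h, hdisj, rfl⟩ | ⟨g, h, k, hp, hq, hk₁, hk₂, rfl⟩)
  · rw [map_pow, FreeGroup.lift_apply_of, sq, genToDihedral_mul_self]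
  · simp only [map_mul, map_inv, FreeGroup.lift_apply_of, mul_inv_eq_one]
    obtain ⟨_, _, _⟩ := g.2
    obtain ⟨_, _, _⟩ := h.2
    unfold genToDihedral
    split_ifs <;> first | omega | simp only [mul_one]
  · simp only [map_mul, map_inv, FreeGroup.lift_apply_of, mul_inv_eq_one]
    obtain ⟨_, _, _⟩ := g.2
    obtain ⟨_, _, _⟩ := h.2
    obtain ⟨_, _, _⟩ := k.2
    unfold genToDihedral
    -- `k` is as long as `h`, which is no longer than `g`: only "all long" and "`h` short" remain.
    split_ifs <;> first | omega | simp only [sr_mul_sr, one_mul, mul_one]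
    have hsum :
        ((k.1.1 + k.1.2 : ℕ) : ZMod 0) + (h.1.1 + h.1.2 : ℕ) = 2 * (g.1.1 + g.1.2 : ℕ) := by
      exact_mod_cast (by omega : k.1.1 + k.1.2 + (h.1.1 + h.1.2) = 2 * (g.1.1 + g.1.2))
    congr 1
    linear_combination hsum

def toDihedral (n : ℕ) : CactusGroup n →* DihedralGroup 0 :=
  PresentedGroup.toGroup (lift_genToDihedral_eq_one n)

theorem toDihedral_of {n : ℕ} (g : CactusGen n) (hg : n ≤ g.1.2 - g.1.1 + 2) :
    toDihedral n (PresentedGroup.of g) = sr (g.1.1 + g.1.2 : ℕ) := by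
  rw [toDihedral, PresentedGroup.toGroup.of, genToDihedral, if_pos hg]

theorem toDihedral_surjective {n : ℕ} (hn : 3 ≤ n) : Function.Surjective (toDihedral n) := by
  rw [← MonoidHom.range_eq_top]
  refine eq_top_of_sr_mem_of_sr_add_one_mem (i := (n : ZMod 0))
    ⟨PresentedGroup.of ⟨(1, n - 1), by omega⟩, ?_⟩
    ⟨PresentedGroup.of ⟨(1, n), by omega⟩, ?_⟩
  · rw [toDihedral_of _ (by dsimp only; omega)]
    dsimp only
    congr 2
    omega
  · rw [toDihedral_of _ (by dsimp only; omega), add_comm]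
    push_cast
    rfl

end CactusGroup

/-- For every `n ≥ 3`, the lower central series of the cactus group `J_n` does not stop:
each term `Γ_{k+1}(J_n)` is a proper subgroup of `Γ_k(J_n)` (here `Γ_k(J_n)` is
`lowerCentralSeries (CactusGroup n) (k-1)`, so the claim is that each
`lowerCentralSeries (CactusGroup n) (k+1)` is properly contained in
`lowerCentralSeries (CactusGroup n) k`). -/
theorem cactus_lcs_does_not_stop (n : ℕ) (hn : 3 ≤ n) :
    ∀ k : ℕ, (⊤ : Subgroup (CactusGroup n)).lowerCentralSeries (k + 1) < (⊤ : Subgroup (CactusGroup n)).lowerCentralSeries k :=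
  fun k => Subgroup.lowerCentralSeries_succ_lt_of_surjective (CactusGroup.toDihedral_surjective hn)
    (DihedralGroup.lowerCentralSeries_succ_lt k)
end

section
/- Let n ≥ 4 and let 2 ≤ j ≤ i ≤ n − 2. Then in the cactus group J_n, the commutators [σ_i, σ_j] and [σ_{i+2}, σ_j] are congruent modulo Γ_3(J_n); that is, [σ_i, σ_j]·[σ_{i+2}, σ_j]⁻¹ ∈ Γ_3(J_n), where σ_i := σ_{1,i}. -/
open scoped commutatorElement

/-!
Write `a = σ_{i+1-j,i}`. Since `σ_iσ_jσ_i = a` and `σ_{i+2}σ_jσ_{i+2} = σ_{i+3-j,i+2}`, the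
two commutators are `a σ_j` and `σ_{i+3-j,i+2} σ_j`. Conjugation by `σ_{k,m+1}` sends
`σ_{k,m}` to `σ_{k+1,m+1}`; with `c = σ_{i+1-j,i+1}`, `d = σ_{i+1-j,i+2}` and `g = [d, c]`,
three such shifts give `g a g⁻¹ = (dcd)(cac)(dcd) = σ_{i+3-j,i+2}`. Hence the quotient of the
two commutators is `[a, g]`, a commutator with a commutator.
-/

theorem commutatorElement_commutatorElement_mem_lowerCentralSeries_two {G : Type*} [Group G]
    (a x y : G) : ⁅a, ⁅x, y⁆⁆ ∈ (⊤ : Subgroup G).lowerCentralSeries 2 := by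
  rw [← commutatorElement_inv]
  exact inv_mem (Subgroup.commutator_mem_commutator
    (Subgroup.commutator_mem_commutator (Subgroup.mem_top x) (Subgroup.mem_top y))
    (Subgroup.mem_top a))

section

variable {n : ℕ}

@[simp]
theorem cactusσ_mul_self (p q : ℕ) : cactusσ n p q * cactusσ n p q = 1 := by
  unfold cactusσ
  split_ifs with h
  · rw [← pow_two]
    exact PresentedGroup.one_of_mem (Or.inl ⟨⟨(p, q), h⟩, rfl⟩)
  · exact mul_one 1

@[simp]
theorem cactusσ_inv (p q : ℕ) : (cactusσ n p q)⁻¹ = cactusσ n p q :=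
  inv_eq_of_mul_eq_one_right (cactusσ_mul_self p q)

/-- The nesting relation, with the reflected interval `[k, l]` given by equations so that no
truncated subtraction appears. -/
theorem cactusσ_mul_cactusσ_of_le {p q r s k l : ℕ} (hp : 1 ≤ p) (hpr : p ≤ r) (hrs : r < s)
    (hsq : s ≤ q) (hq : q ≤ n) (hk : k + s = p + q) (hl : l + r = p + q) :
    cactusσ n p q * cactusσ n r s = cactusσ n k l * cactusσ n p q := by
  obtain rfl : k = p + q - s := by omega
  obtain rfl : l = p + q - r := by omega
  have hg : 1 ≤ p ∧ p < q ∧ q ≤ n := ⟨hp, by omega, hq⟩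
  have hh : 1 ≤ r ∧ r < s ∧ s ≤ n := ⟨by omega, hrs, by omega⟩
  have hkl : 1 ≤ p + q - s ∧ p + q - s < p + q - r ∧ p + q - r ≤ n := by omega
  have hrel := PresentedGroup.one_of_mem (rels := cactusRels n) <| Or.inr <| Or.inr
    ⟨⟨(p, q), hg⟩, ⟨(r, s), hh⟩, ⟨(p + q - s, p + q - r), hkl⟩, hpr, hsq, rfl, rfl, rfl⟩
  rw [cactusσ, dif_pos hg, cactusσ, dif_pos hh, cactusσ, dif_pos hkl]
  rwa [map_mul, map_inv, mul_inv_eq_one] at hrel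

theorem cactusσ_conj_of_le {p q r s k l : ℕ} (hp : 1 ≤ p) (hpr : p ≤ r) (hrs : r < s)
    (hsq : s ≤ q) (hq : q ≤ n) (hk : k + s = p + q) (hl : l + r = p + q) :
    cactusσ n p q * cactusσ n r s * cactusσ n p q = cactusσ n k l := by
  rw [cactusσ_mul_cactusσ_of_le hp hpr hrs hsq hq hk hl, mul_assoc, cactusσ_mul_self, mul_one]

theorem commutatorElement_cactusσ_of_le {p q r s k l : ℕ} (hp : 1 ≤ p) (hpr : p ≤ r)
    (hrs : r < s) (hsq : s ≤ q) (hq : q ≤ n) (hk : k + s = p + q) (hl : l + r = p + q) :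
    ⁅cactusσ n p q, cactusσ n r s⁆ = cactusσ n k l * cactusσ n r s := by
  rw [commutatorElement_def, cactusσ_inv, cactusσ_inv,
    cactusσ_conj_of_le hp hpr hrs hsq hq hk hl]

theorem cactusσ_conj_shift {k m : ℕ} (hk : 1 ≤ k) (hkm : k < m) (hm : m + 1 ≤ n) :
    cactusσ n k (m + 1) * cactusσ n k m * cactusσ n k (m + 1) = cactusσ n (k + 1) (m + 1) :=
  cactusσ_conj_of_le hk le_rfl hkm (by omega) hm (by omega) (by omega)

theorem commutatorElement_conj_cactusσ {k m : ℕ} (hk : 1 ≤ k) (hkm : k < m) (hm : m + 2 ≤ n) :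
    ⁅cactusσ n k (m + 2), cactusσ n k (m + 1)⁆ * cactusσ n k m *
      ⁅cactusσ n k (m + 2), cactusσ n k (m + 1)⁆⁻¹ = cactusσ n (k + 2) (m + 2) := by
  set c := cactusσ n k (m + 1)
  set d := cactusσ n k (m + 2)
  have hdc : d * c * d = cactusσ n (k + 1) (m + 2) := cactusσ_conj_shift hk (by omega) hm
  have hca : c * cactusσ n k m * c = cactusσ n (k + 1) (m + 1) :=
    cactusσ_conj_shift hk hkm (by omega)
  calc ⁅d, c⁆ * cactusσ n k m * ⁅d, c⁆⁻¹
      = (d * c * d) * (c * cactusσ n k m * c) * (d * c * d) := by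
        simp only [commutatorElement_def, mul_inv_rev, cactusσ_inv, c, d, mul_assoc]
    _ = cactusσ n (k + 2) (m + 2) := by
        rw [hdc, hca]
        exact cactusσ_conj_shift (by omega) (by omega) hm

end

theorem cactus_commutator_shift_by_two_general (n i j : ℕ)
    (hj : 2 ≤ j) (hji : j ≤ i) (hi : i ≤ n - 2) :
    ⁅cactusσ n 1 i, cactusσ n 1 j⁆ * (⁅cactusσ n 1 (i + 2), cactusσ n 1 j⁆)⁻¹ ∈
      (⊤ : Subgroup (CactusGroup n)).lowerCentralSeries 2 := by
  set a := cactusσ n (i + 1 - j) i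
  set g := ⁅cactusσ n (i + 1 - j) (i + 2), cactusσ n (i + 1 - j) (i + 1)⁆
  have h₁ : ⁅cactusσ n 1 i, cactusσ n 1 j⁆ = a * cactusσ n 1 j :=
    commutatorElement_cactusσ_of_le le_rfl le_rfl (by omega) hji (by omega) (by omega) (by omega)
  have h₂ : ⁅cactusσ n 1 (i + 2), cactusσ n 1 j⁆ = g * a * g⁻¹ * cactusσ n 1 j := by
    rw [commutatorElement_conj_cactusσ (by omega) (by omega) (by omega)]
    exact commutatorElement_cactusσ_of_le le_rfl le_rfl (by omega) (by omega) (by omega)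
      (by omega) (by omega)
  have h₃ : a * cactusσ n 1 j * (g * a * g⁻¹ * cactusσ n 1 j)⁻¹ = ⁅a, g⁆ := by
    rw [commutatorElement_def]
    group
  rw [h₁, h₂, h₃]
  exact commutatorElement_commutatorElement_mem_lowerCentralSeries_two _ _ _

/-- For `n ≥ 4` and `2 ≤ j ≤ i ≤ n - 2`, the commutators `[σ_{1,i}, σ_{1,j}]` and
`[σ_{1,i+2}, σ_{1,j}]` are congruent modulo `Γ₃(J_n) = lowerCentralSeries (CactusGroup n) 2`. -/
theorem cactus_commutator_shift_by_two (n i j : ℕ) (hn : 4 ≤ n)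
    (hj : 2 ≤ j) (hji : j ≤ i) (hi : i ≤ n - 2) :
    ⁅cactusσ n 1 i, cactusσ n 1 j⁆ * (⁅cactusσ n 1 (i + 2), cactusσ n 1 j⁆)⁻¹ ∈
      (⊤ : Subgroup (CactusGroup n)).lowerCentralSeries 2 :=
  cactus_commutator_shift_by_two_general n i j hj hji hi
end
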